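/- Let n, k, ℓ, ℓ*, τ be integers with k ≥ 2, ℓ ≥ 1, ℓ* ≥ 1, ℓ + ℓ* ≤ n, and τ ≥ 0, and let g ≥ 1 be a real number. Define f(m, j, t) := g^{j(m−j)/(k−1)} · 2^{j(m−j)·m²/2^t}. Then f(n−ℓ*, ℓ, τ) · f(n, ℓ*, τ)^{ℓ/(n−ℓ*)} ≤ f(n, ℓ, τ). -/
import Mathlib


noncomputable section

/-- `f(m, j, t) = g^(j(m-j)/(k-1)) * 2^(j(m-j)·m²/2^t)`. -/
def f (g : ℝ) (k m j t : ℤ) : ℝ :=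
  g ^ ((j : ℝ) * ((m : ℝ) - (j : ℝ)) / ((k : ℝ) - 1)) *
    2 ^ ((j : ℝ) * ((m : ℝ) - (j : ℝ)) * (m : ℝ) ^ 2 / 2 ^ (t : ℝ))

theorem stmt10 (n k ℓ lstar τ : ℤ) (hk : 2 ≤ k) (hℓ : 1 ≤ ℓ) (hlstar : 1 ≤ lstar)
    (hsum : ℓ + lstar ≤ n) (hτ : 0 ≤ τ) (g : ℝ) (hg : 1 ≤ g) :
    f g k (n - lstar) ℓ τ * f g k n lstar τ ^ ((ℓ : ℝ) / ((n : ℝ) - (lstar : ℝ))) ≤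
      f g k n ℓ τ := by
  have hg0 : (0:ℝ) < g := lt_of_lt_of_le one_pos hg
  have hkr : (0:ℝ) < (k:ℝ) - 1 := by
    have : (2:ℝ) ≤ (k:ℝ) := by exact_mod_cast hk
    linarith
  have hl1 : (1:ℝ) ≤ (ℓ:ℝ) := by exact_mod_cast hℓ
  have hls1 : (1:ℝ) ≤ (lstar:ℝ) := by exact_mod_cast hlstar
  have hsum' : (ℓ:ℝ) + (lstar:ℝ) ≤ (n:ℝ) := by exact_mod_cast hsum
  have hd : (0:ℝ) < (n:ℝ) - (lstar:ℝ) := by linarith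
  have hT : (0:ℝ) < 2 ^ (τ:ℝ) := Real.rpow_pos_of_pos (by norm_num) _
  simp only [f]
  push_cast
  rw [Real.mul_rpow (by positivity) (by positivity),
    ← Real.rpow_mul hg0.le, ← Real.rpow_mul (by norm_num : (0:ℝ) ≤ 2),
    mul_mul_mul_comm, ← Real.rpow_add hg0, ← Real.rpow_add (by norm_num : (0:ℝ) < 2)]
  have hE : (ℓ:ℝ) * ((n:ℝ) - (lstar:ℝ) - (ℓ:ℝ)) / ((k:ℝ) - 1) +
      (lstar:ℝ) * ((n:ℝ) - (lstar:ℝ)) / ((k:ℝ) - 1) * ((ℓ:ℝ) / ((n:ℝ) - (lstar:ℝ))) =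
      (ℓ:ℝ) * ((n:ℝ) - (ℓ:ℝ)) / ((k:ℝ) - 1) := by
    field_simp
    ring
  rw [hE]
  gcongr
  · norm_num
  have h1 : (0:ℝ) ≤ (n:ℝ) - (ℓ:ℝ) - (lstar:ℝ) := by linarith
  have h2 : (0:ℝ) ≤ (n:ℝ)^2 - ((n:ℝ)-(lstar:ℝ))^2 := by nlinarith
  have key : (0:ℝ) ≤ (ℓ:ℝ) * ((n:ℝ) - (ℓ:ℝ) - (lstar:ℝ)) * ((n:ℝ)^2 - ((n:ℝ)-(lstar:ℝ))^2) := by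
    have : (0:ℝ) ≤ (ℓ:ℝ) := by linarith
    positivity
  rw [div_mul_div_comm, mul_comm ((lstar:ℝ) * ((n:ℝ) - (lstar:ℝ)) * (n:ℝ)^2) (ℓ:ℝ)]
  rw [div_add_div _ _ (ne_of_gt hT) (ne_of_gt (mul_pos hT hd)), div_le_div_iff₀ (by positivity) hT]
  nlinarith [mul_nonneg key (mul_nonneg hT.le (mul_nonneg hT.le hd.le)), mul_pos hT hd]
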